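/- Let G be a finite connected graph with N vertices. Fix k ≥ 0 and let K be a function on non-backtracking paths of length k, with associated operator K_G(x,y) = Σ K(x_0;x_k) summed over non-backtracking paths from x to y of length k. Then (1/N)Σ_{x,y∈V}|K_G(x,y)|² ≤ (1/N)Σ_{(x_0;x_k)∈B_k}|K(x_0;x_k)|² + c_{k,q}·(#{x∈V : ρ_G(x) < k}/N)·sup|K|², where ρ_G(x) is the injectivity radius at x (the largest ρ such that the ball B_G(x,ρ) is a tree), and c_{k,q} is a constant depending only on k and the maximal degree q+1 of G (one may take c_{k,q} = |B(x,k)|²_max). -/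

import Mathlib

open Finset

variable {V : Type*}

/-- A non-backtracking walk of length `n`: consecutive vertices are adjacent and
`p (i+2) ≠ p i`. -/
def IsNBWalk (G : SimpleGraph V) {n : ℕ} (p : Fin (n + 1) → V) : Prop :=
  (∀ i j : Fin (n + 1), (j : ℕ) = (i : ℕ) + 1 → G.Adj (p i) (p j)) ∧
  (∀ i j : Fin (n + 1), (j : ℕ) = (i : ℕ) + 2 → p j ≠ p i)

instance (G : SimpleGraph V) [DecidableEq V] [DecidableRel G.Adj] (n : ℕ) :
    DecidablePred (IsNBWalk G (n := n)) := fun _ => by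
  unfold IsNBWalk; infer_instance

/-
If the ball of radius `k` about `x` is a tree, a non-backtracking walk of length `k` from `x` is a
path in that tree and is therefore determined by its endpoint; so the row `y ↦ K_G(x, y)` just
redistributes the values of `K` on the walks from `x`, and its squared ℓ² norm equals theirs. At
any other `x` the row is bounded crudely: there are at most `(q + 1) q ^ (k - 1)` non-backtracking
walks of length `k` from `x`, each contributing at most `M`. Summing over `x` gives the estimate.
-/

namespace IsNBWalk

open SimpleGraph

variable {G : SimpleGraph V} {n : ℕ} {p p' : Fin (n + 1) → V}

def toWalk (hp : IsNBWalk G p) : G.Walk (p 0) (p (Fin.last n)) :=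
  (Walk.ofSupport (List.ofFn p) (by simp)
    (List.isChain_ofFn.2 fun _ _ => hp.1 _ _ rfl)).copy (by simp) (List.getLast_ofFn_succ p)

@[simp]
lemma support_toWalk (hp : IsNBWalk G p) : hp.toWalk.support = List.ofFn p := by
  simp [toWalk]

@[simp]
lemma length_toWalk (hp : IsNBWalk G p) : hp.toWalk.length = n := by
  simp [toWalk]

lemma getVert_toWalk (hp : IsNBWalk G p) (i : Fin (n + 1)) : hp.toWalk.getVert i = p i := by
  simp only [Walk.getVert_eq_support_getElem _ (by simp; omega : (i : ℕ) ≤ hp.toWalk.length),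
    support_toWalk, List.getElem_ofFn]

lemma init {p : Fin (n + 2) → V} (hp : IsNBWalk G p) : IsNBWalk G (Fin.init p) :=
  ⟨fun i j h => hp.1 _ _ (by simpa using h), fun i j h => hp.2 _ _ (by simpa using h)⟩

lemma dist_le (hp : IsNBWalk G p) (i : Fin (n + 1)) : G.dist (p 0) (p i) ≤ i := by
  have := SimpleGraph.dist_le (hp.toWalk.take i)
  rw [Walk.take_length, getVert_toWalk] at this
  omega

-- If the last vertex already occurred, acyclicity makes it the penultimate vertex of the prefix,
-- i.e. the walk backtracks.
theorem isPath_toWalk (hG : G.IsAcyclic) :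
    ∀ {n : ℕ} {p : Fin (n + 1) → V} (hp : IsNBWalk G p), hp.toWalk.IsPath
  | 0, p, hp => by rw [Walk.isPath_def, support_toWalk]; simp
  | n + 1, p, hp => by
    have ih := isPath_toWalk hG hp.init
    rw [Walk.isPath_def, support_toWalk, List.ofFn_succ', List.nodup_concat]
    refine ⟨fun hmem => ?_, support_toWalk hp.init ▸ ih.support_nodup⟩
    have hadj : G.Adj (Fin.init p (Fin.last n)) (p (Fin.last (n + 1))) := hp.1 _ _ (by simp)
    have hpen := hG.eq_penultimate_of_adj_end ih hadj (by rwa [support_toWalk])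
    rw [Walk.penultimate, length_toWalk] at hpen
    rw [show n - 1 = ((⟨n - 1, by omega⟩ : Fin (n + 1)) : ℕ) from rfl, getVert_toWalk] at hpen
    rcases n with _ | n
    · exact hadj.ne hpen.symm
    · exact hp.2 ⟨n, by omega⟩ (Fin.last _) (by simp) hpen

theorem eq_of_isAcyclic (hG : G.IsAcyclic) (hp : IsNBWalk G p) (hp' : IsNBWalk G p')
    (h0 : p 0 = p' 0) (hl : p (Fin.last n) = p' (Fin.last n)) : p = p' := by
  have := (hG.subsingleton_path _ _).elim ⟨_, isPath_toWalk hG hp⟩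
    ⟨_, (Walk.isPath_copy _ h0.symm hl.symm).2 (isPath_toWalk hG hp')⟩
  have hsupp := congrArg (fun w : G.Path _ _ => w.1.support) this
  simp only [support_toWalk, Walk.support_copy] at hsupp
  exact List.ofFn_injective hsupp

lemma induce (hp : IsNBWalk G p) {S : Set V} (hS : ∀ i, p i ∈ S) :
    IsNBWalk (G.induce S) (fun i => ⟨p i, hS i⟩) :=
  ⟨fun i j h => hp.1 i j h, fun i j h heq => hp.2 i j h (congrArg Subtype.val heq)⟩

lemma dist_zero_le_length (hp : IsNBWalk G p) (i : Fin (n + 1)) : G.dist (p 0) (p i) ≤ n :=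
  (hp.dist_le i).trans (Nat.lt_succ_iff.1 i.isLt)

theorem eq_of_isAcyclic_induce_ball {x : V} (hx : (G.induce {y | G.dist x y ≤ n}).IsAcyclic)
    (hp : IsNBWalk G p) (hp' : IsNBWalk G p') (h0 : p 0 = x) (h0' : p' 0 = x)
    (hl : p (Fin.last n) = p' (Fin.last n)) : p = p' := by
  subst h0
  have hlift := eq_of_isAcyclic hx (hp.induce hp.dist_zero_le_length)
    (hp'.induce (h0' ▸ hp'.dist_zero_le_length)) (Subtype.ext h0'.symm) (Subtype.ext hl)
  funext i
  exact congrArg Subtype.val (congrFun hlift i)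

end IsNBWalk

section FiberSums

variable {ι β E : Type*} [Fintype β] [DecidableEq β] [SeminormedAddCommGroup E]
  (s : Finset ι) (f : ι → β) (K : ι → E)

lemma norm_sum_sq_of_card_le_one {t : Finset ι} (ht : #t ≤ 1) :
    ‖∑ i ∈ t, K i‖ ^ 2 = ∑ i ∈ t, ‖K i‖ ^ 2 := by
  rcases Nat.le_one_iff_eq_zero_or_eq_one.1 ht with ht | ht
  · simp [card_eq_zero.1 ht]
  · obtain ⟨a, rfl⟩ := card_eq_one.1 ht
    simp

lemma sum_norm_sum_fiber_sq_of_injOn (hf : Set.InjOn f s) :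
    ∑ y, ‖∑ i ∈ s with f i = y, K i‖ ^ 2 = ∑ i ∈ s, ‖K i‖ ^ 2 := by
  rw [← sum_fiberwise s f fun i => ‖K i‖ ^ 2]
  refine sum_congr rfl fun y _ => norm_sum_sq_of_card_le_one K <| card_le_one.2 ?_
  intro a ha b hb
  obtain ⟨has, rfl⟩ := mem_filter.1 ha
  obtain ⟨hbs, hfb⟩ := mem_filter.1 hb
  exact hf has hbs hfb.symm

lemma sum_norm_sum_fiber_sq_le (M : ℝ) (hM : ∀ i ∈ s, ‖K i‖ ≤ M) :
    ∑ y, ‖∑ i ∈ s with f i = y, K i‖ ^ 2 ≤ (#s * M) ^ 2 := calc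
  ∑ y, ‖∑ i ∈ s with f i = y, K i‖ ^ 2 ≤ ∑ y, (∑ i ∈ s with f i = y, ‖K i‖) ^ 2 :=
    sum_le_sum fun y _ => pow_le_pow_left₀ (norm_nonneg _) (norm_sum_le _ _) 2
  _ ≤ (∑ y, ∑ i ∈ s with f i = y, ‖K i‖) ^ 2 :=
    sum_sq_le_sq_sum_of_nonneg fun y _ => sum_nonneg fun i _ => norm_nonneg _
  _ = (∑ i ∈ s, ‖K i‖) ^ 2 := by rw [sum_fiberwise]
  _ ≤ (#s * M) ^ 2 := pow_le_pow_left₀ (sum_nonneg fun i _ => norm_nonneg _)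
    (by simpa using sum_le_card_nsmul s (fun i => ‖K i‖) M hM) 2

end FiberSums

section NBWalksFrom

open SimpleGraph

variable [Fintype V] [DecidableEq V] (G : SimpleGraph V) [DecidableRel G.Adj]

def nbWalksFrom (n : ℕ) (x : V) : Finset (Fin (n + 1) → V) :=
  univ.filter fun p => IsNBWalk G p ∧ p 0 = x

variable {G}

@[simp]
lemma mem_nbWalksFrom {n : ℕ} {x : V} {p : Fin (n + 1) → V} :
    p ∈ nbWalksFrom G n x ↔ IsNBWalk G p ∧ p 0 = x := by
  simp [nbWalksFrom]

lemma card_nbWalksFrom_zero_le (x : V) : #(nbWalksFrom G 0 x) ≤ 1 :=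
  card_le_one.2 fun p hp p' hp' => funext fun i => by
    fin_cases i
    exact (mem_nbWalksFrom.1 hp).2.trans (mem_nbWalksFrom.1 hp').2.symm

lemma card_nbWalksFrom_one_le (x : V) : #(nbWalksFrom G 1 x) ≤ G.degree x := by
  rw [← card_neighborFinset_eq_degree]
  refine card_le_card_of_injOn (fun p => p 1) (fun p hp => ?_) fun p hp p' hp' h => ?_
  · obtain ⟨hnb, rfl⟩ := mem_nbWalksFrom.1 hp
    exact (mem_neighborFinset _ _ _).2 (hnb.1 0 1 rfl)
  · obtain ⟨-, hp0⟩ := mem_nbWalksFrom.1 hp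
    obtain ⟨-, hp'0⟩ := mem_nbWalksFrom.1 hp'
    funext i
    fin_cases i
    exacts [hp0.trans hp'0.symm, h]

lemma card_nbWalksFrom_succ_succ_le {q : ℕ} (hdeg : ∀ v, G.degree v ≤ q + 1) (n : ℕ) (x : V) :
    #(nbWalksFrom G (n + 2) x) ≤ q * #(nbWalksFrom G (n + 1) x) := by
  refine card_le_mul_card_image_of_maps_to (f := Fin.init) (fun p hp => ?_) q fun b hb => ?_
  · obtain ⟨hnb, rfl⟩ := mem_nbWalksFrom.1 hp
    exact mem_nbWalksFrom.2 ⟨hnb.init, rfl⟩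
  calc #{p ∈ nbWalksFrom G (n + 2) x | Fin.init p = b}
      ≤ #((G.neighborFinset (b (Fin.last _))).erase (b (Fin.last n).castSucc)) := by
        refine card_le_card_of_injOn (fun p => p (Fin.last _)) (fun p hp => ?_)
          fun p hp p' hp' h => ?_
        · obtain ⟨hmem, rfl⟩ := mem_filter.1 (mem_coe.1 hp)
          obtain ⟨hnb, -⟩ := mem_nbWalksFrom.1 hmem
          refine mem_coe.2 <| mem_erase.2
            ⟨hnb.2 (Fin.last n).castSucc.castSucc (Fin.last _) (by simp),
              (mem_neighborFinset _ _ _).2 (hnb.1 (Fin.last _).castSucc (Fin.last _) (by simp))⟩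
        · rw [← Fin.snoc_init_self p, ← Fin.snoc_init_self p', (mem_filter.1 (mem_coe.1 hp)).2,
            (mem_filter.1 (mem_coe.1 hp')).2]
          exact congrArg _ h
    _ ≤ q := by
        have hadj := (mem_nbWalksFrom.1 hb).1.1 (Fin.last n).castSucc (Fin.last _) (by simp)
        rw [card_erase_of_mem ((mem_neighborFinset _ _ _).2 hadj.symm),
          card_neighborFinset_eq_degree]
        have := hdeg (b (Fin.last _))
        omega

lemma card_nbWalksFrom_succ_le {q : ℕ} (hdeg : ∀ v, G.degree v ≤ q + 1) (x : V) :
    ∀ n, #(nbWalksFrom G (n + 1) x) ≤ (q + 1) * q ^ n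
  | 0 => by simpa using (card_nbWalksFrom_one_le x).trans (hdeg x)
  | n + 1 => calc
      #(nbWalksFrom G (n + 2) x) ≤ q * #(nbWalksFrom G (n + 1) x) :=
        card_nbWalksFrom_succ_succ_le hdeg n x
      _ ≤ q * ((q + 1) * q ^ n) := Nat.mul_le_mul_left q (card_nbWalksFrom_succ_le hdeg x n)
      _ = (q + 1) * q ^ (n + 1) := by ring

lemma card_nbWalksFrom_le {q : ℕ} (hdeg : ∀ v, G.degree v ≤ q + 1) (x : V) :
    ∀ n, #(nbWalksFrom G n x) ≤ 1 + (q + 1) * ∑ i ∈ range n, q ^ i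
  | 0 => by simpa using card_nbWalksFrom_zero_le x
  | n + 1 => calc
      #(nbWalksFrom G (n + 1) x) ≤ (q + 1) * q ^ n := card_nbWalksFrom_succ_le hdeg x n
      _ ≤ (q + 1) * ∑ i ∈ range (n + 1), q ^ i :=
        Nat.mul_le_mul_left _ (single_le_sum (fun _ _ => Nat.zero_le _) (self_mem_range_succ n))
      _ ≤ _ := Nat.le_add_left _ _

variable {E : Type*} [SeminormedAddCommGroup E] {n : ℕ} (K : (Fin (n + 1) → V) → E) {M c : ℝ}

lemma sum_norm_sum_nbWalksFrom_sq_eq {x : V} (hx : (G.induce {y | G.dist x y ≤ n}).IsAcyclic) :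
    ∑ y, ‖∑ p ∈ nbWalksFrom G n x with p (Fin.last n) = y, K p‖ ^ 2 =
      ∑ p ∈ nbWalksFrom G n x, ‖K p‖ ^ 2 := by
  refine sum_norm_sum_fiber_sq_of_injOn _ _ K fun p hp p' hp' h => ?_
  obtain ⟨hnb, hp0⟩ := mem_nbWalksFrom.1 hp
  obtain ⟨hnb', hp'0⟩ := mem_nbWalksFrom.1 hp'
  exact hnb.eq_of_isAcyclic_induce_ball hx hnb' hp0 hp'0 h

lemma sum_norm_sum_nbWalksFrom_sq_le (hM : ∀ p, ‖K p‖ ≤ M) {x : V}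
    (hc : #(nbWalksFrom G n x) ≤ c) :
    ∑ y, ‖∑ p ∈ nbWalksFrom G n x with p (Fin.last n) = y, K p‖ ^ 2 ≤ c ^ 2 * M ^ 2 := calc
  _ ≤ (#(nbWalksFrom G n x) * M) ^ 2 := sum_norm_sum_fiber_sq_le _ _ K M fun p _ => hM p
  _ ≤ c ^ 2 * M ^ 2 := by rw [mul_pow]; gcongr

lemma sum_sum_norm_sum_nbWalks_sq_le (hM : ∀ p, ‖K p‖ ≤ M)
    (hc : ∀ x, #(nbWalksFrom G n x) ≤ c) :
    ∑ x, ∑ y, ‖∑ p ∈ univ.filter (fun p : Fin (n + 1) → V =>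
        IsNBWalk G p ∧ p 0 = x ∧ p (Fin.last n) = y), K p‖ ^ 2 ≤
      ∑ p ∈ univ.filter (fun p : Fin (n + 1) → V => IsNBWalk G p), ‖K p‖ ^ 2 +
        Nat.card {x // ¬ (G.induce {y | G.dist x y ≤ n}).IsAcyclic} * (c ^ 2 * M ^ 2) := by
  classical
  have hfiber : ∀ x y, univ.filter (fun p : Fin (n + 1) → V =>
      IsNBWalk G p ∧ p 0 = x ∧ p (Fin.last n) = y) =
        {p ∈ nbWalksFrom G n x | p (Fin.last n) = y} := by
    simp [nbWalksFrom, filter_filter, and_assoc]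
  have hfrom : ∀ x, nbWalksFrom G n x = {p ∈ univ.filter (IsNBWalk G) | p 0 = x} := by
    simp [nbWalksFrom, filter_filter]
  calc _ = ∑ x, ∑ y, ‖∑ p ∈ nbWalksFrom G n x with p (Fin.last n) = y, K p‖ ^ 2 := by
        simp only [hfiber]
    _ ≤ ∑ x, (∑ p ∈ nbWalksFrom G n x, ‖K p‖ ^ 2 +
          if (G.induce {y | G.dist x y ≤ n}).IsAcyclic then 0 else c ^ 2 * M ^ 2) := by
        refine sum_le_sum fun x _ => ?_
        split_ifs with hx
        · exact (sum_norm_sum_nbWalksFrom_sq_eq K hx).trans_le (add_zero _).ge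
        · exact (sum_norm_sum_nbWalksFrom_sq_le K hM (hc x)).trans
            (le_add_of_nonneg_left (sum_nonneg fun p _ => sq_nonneg _))
    _ = _ := by
      rw [sum_add_distrib]
      simp only [hfrom, sum_fiberwise]
      simp [sum_ite, Nat.card_eq_fintype_card, Fintype.card_subtype]

end NBWalksFrom

theorem HSN_le_pathNorm_plus_error_general [Fintype V] [DecidableEq V] (G : SimpleGraph V)
    [DecidableRel G.Adj]
    (q k : ℕ) (hdeg : ∀ v : V, G.degree v ≤ q + 1)
    (K : (Fin (k + 1) → V) → ℂ) (M : ℝ) (hM : ∀ p, ‖K p‖ ≤ M) :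
    (1 / (Fintype.card V : ℝ)) * ∑ x : V, ∑ y : V,
        ‖∑ p ∈ univ.filter (fun p : Fin (k + 1) → V =>
          IsNBWalk G p ∧ p 0 = x ∧ p (Fin.last k) = y), K p‖ ^ 2
      ≤ (1 / (Fintype.card V : ℝ)) *
          (∑ p ∈ univ.filter (fun p : Fin (k + 1) → V => IsNBWalk G p),
            ‖K p‖ ^ 2)
        + (1 + ((q : ℝ) + 1) * ∑ i ∈ Finset.range k, (q : ℝ) ^ i) ^ 2 *
          ((Nat.card {x : V // ¬ (SimpleGraph.induce {y : V | G.dist x y ≤ k} G).IsAcyclic} : ℝ)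
            / (Fintype.card V : ℝ)) * M ^ 2 := by
  have hc : ∀ x, (#(nbWalksFrom G k x) : ℝ) ≤ 1 + ((q : ℝ) + 1) * ∑ i ∈ range k, (q : ℝ) ^ i :=
    fun x => by exact_mod_cast card_nbWalksFrom_le hdeg x k
  calc _ ≤ (1 / (Fintype.card V : ℝ)) * (_ + _) :=
        mul_le_mul_of_nonneg_left (sum_sum_norm_sum_nbWalks_sq_le K hM hc) (by positivity)
    _ = _ := by ring

/-- Hilbert–Schmidt-norm comparison: the normalized HS norm of the operator K_G built
from a kernel K on non-backtracking paths of length k is bounded by the normalized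
ℓ²-norm of K plus an error controlled by the number of vertices of injectivity
radius < k. -/
theorem HSN_le_pathNorm_plus_error [Fintype V] [DecidableEq V] (G : SimpleGraph V)
    [DecidableRel G.Adj]
    (q k : ℕ) (hdeg : ∀ v : V, G.degree v ≤ q + 1) (hconn : G.Connected)
    (K : (Fin (k + 1) → V) → ℂ) (M : ℝ) (hM : ∀ p, ‖K p‖ ≤ M) :
    (1 / (Fintype.card V : ℝ)) * ∑ x : V, ∑ y : V,
        ‖∑ p ∈ univ.filter (fun p : Fin (k + 1) → V =>
          IsNBWalk G p ∧ p 0 = x ∧ p (Fin.last k) = y), K p‖ ^ 2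
      ≤ (1 / (Fintype.card V : ℝ)) *
          (∑ p ∈ univ.filter (fun p : Fin (k + 1) → V => IsNBWalk G p),
            ‖K p‖ ^ 2)
        + (1 + ((q : ℝ) + 1) * ∑ i ∈ Finset.range k, (q : ℝ) ^ i) ^ 2 *
          ((Nat.card {x : V // ¬ (SimpleGraph.induce {y : V | G.dist x y ≤ k} G).IsAcyclic} : ℝ)
            / (Fintype.card V : ℝ)) * M ^ 2 :=
  HSN_le_pathNorm_plus_error_general G q k hdeg K M hM
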